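/- For every decorated tree T, we have fl(T) = rpath(h_T(T)), where rpath denotes the number of edges on the rightmost path. -/

import Mathlib

/-- Rooted plane trees with integer labels on the leaves. -/
inductive DTree where
  | leaf : ℤ → DTree
  | node : List DTree → DTree

mutual
/-- The list of leaf labels of a tree, in left-to-right (prefix traversal) order. -/
def leafLabels : DTree → List ℤ
  | .leaf l => [l]
  | .node ts => leafLabelsList ts
def leafLabelsList : List DTree → List ℤ
  | [] => []
  | t :: ts => leafLabels t ++ leafLabelsList ts
end

/-- The three conditions of decorated trees, for a subtree whose root is at depth `d`:
leaf labels are at least -1 and strictly less than the depth of their parent;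
every internal node of positive depth `d` has a descendant leaf labeled at most `d - 2`;
and in any direct subtree of an internal node of depth `d`, a leaf labeled `d` is
preceded in traversal order only by leaves labeled at least `d`. -/
inductive DecoAt : DTree → ℕ → Prop where
  | leaf {l : ℤ} {d : ℕ} (h1 : -1 ≤ l) (h2 : l < (d : ℤ) - 1) : DecoAt (.leaf l) d
  | node {ts : List DTree} {d : ℕ} (hne : ts ≠ [])
      (h2 : 0 < d → ∃ x ∈ leafLabelsList ts, x ≤ (d : ℤ) - 2)
      (h3 : ∀ t' ∈ ts, ∀ a b, leafLabels t' = a ++ (d : ℤ) :: b → ∀ x ∈ a, (d : ℤ) ≤ x)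
      (h4 : ∀ t' ∈ ts, DecoAt t' (d + 1)) : DecoAt (.node ts) d

/-- A decorated tree: the root is at depth 0. -/
def IsDeco (T : DTree) : Prop := DecoAt T 0

/-- The number of free leaves (leaves labeled -1). -/
def fl (T : DTree) : ℕ := (leafLabels T).count (-1)

mutual
/-- Increment leaf labels, where the counter `m` is the number of free leaves (from
the left) that still must be incremented; once it reaches 0, remaining free leaves
are left untouched. Returns the new tree and the remaining counter. -/
def incUpTo : DTree → ℕ → DTree × ℕ
  | .leaf l, m =>
      if l = -1 then (if 0 < m then (.leaf 0, m - 1) else (.leaf (-1), m))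
      else (.leaf (l + 1), m)
  | .node ts, m =>
      let p := incList ts m
      (.node p.1, p.2)
def incList : List DTree → ℕ → List DTree × ℕ
  | [], m => ([], m)
  | t :: ts, m =>
      let p := incUpTo t m
      let q := incList ts p.2
      (p.1 :: q.1, q.2)
end

/-- Δ_T(T,i): attach `T` under a new root vertex and add 1 to every leaf label,
except for the last `i` free leaves (in traversal order). -/
def deltaT (T : DTree) (i : ℕ) : DTree := .node [(incUpTo T (fl T - i)).1]

mutual
/-- Subtract 1 from every non-free leaf label. -/
def decLeaves : DTree → DTree
  | .leaf l => if l = -1 then .leaf (-1) else .leaf (l - 1)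
  | .node ts => .node (decList ts)
def decList : List DTree → List DTree
  | [] => []
  | t :: ts => decLeaves t :: decList ts
end

/-- Π_T: remove the root (which has a unique child) and subtract 1 from every
non-free leaf label. -/
def piT : DTree → DTree
  | .node [t] => decLeaves t
  | t => t

/-- ⊕_T(T1,i,T2): identify the roots of Δ_T(T1,i) and T2, with the subtrees of
Δ_T(T1,i) placed to the left. -/
def oplusT (T1 : DTree) (i : ℕ) (T2 : DTree) : DTree :=
  match deltaT T1 i, T2 with
  | .node a, .node b => .node (a ++ b)
  | _, _ => deltaT T1 i

mutual
/-- Attach a free leaf as rightmost child of the `i`-th node on the rightmost path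
(the root being the first node of the rightmost path). -/
def attachR : DTree → ℕ → DTree
  | .leaf _, _ => .leaf (-1)
  | .node ts, i =>
      if i ≤ 1 then .node (ts ++ [.leaf (-1)])
      else .node (attachRLast ts (i - 1))
def attachRLast : List DTree → ℕ → List DTree
  | [], _ => []
  | [t], i => [attachR t i]
  | t :: ts, i => t :: attachRLast ts i
end

mutual
/-- Attach a free leaf below the rightmost leaf, which becomes an internal node. -/
def growR : DTree → DTree
  | .leaf _ => .node [.leaf (-1)]
  | .node ts => .node (growRLast ts)
def growRLast : List DTree → List DTree
  | [] => []
  | [t] => [growR t]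
  | t :: ts => t :: growRLast ts
end

mutual
/-- The number of edges on the rightmost path (from the root to the rightmost leaf). -/
def rpath : DTree → ℕ
  | .leaf _ => 0
  | .node ts => rpathLast ts
def rpathLast : List DTree → ℕ
  | [] => 0
  | [t] => rpath t + 1
  | _ :: ts => rpathLast ts
end

mutual
/-- Add `r` to every leaf label. -/
def addAll (r : ℤ) : DTree → DTree
  | .leaf l => .leaf (l + r)
  | .node ts => .node (addAllList r ts)
def addAllList (r : ℤ) : List DTree → List DTree
  | [] => []
  | t :: ts => addAll r t :: addAllList r ts
end

mutual
/-- Add `r` to every leaf label except the rightmost leaf. -/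
def addExceptLast (r : ℤ) : DTree → DTree
  | .leaf l => .leaf l
  | .node ts => .node (addExceptLastList r ts)
def addExceptLastList (r : ℤ) : List DTree → List DTree
  | [] => []
  | [t] => [addExceptLast r t]
  | t :: ts => addAll r t :: addExceptLastList r ts
end

mutual
/-- Replace the rightmost leaf by the tree `repl`. -/
def replaceR (repl : DTree) : DTree → DTree
  | .leaf _ => repl
  | .node ts => .node (replaceRList repl ts)
def replaceRList (repl : DTree) : List DTree → List DTree
  | [] => []
  | [t] => [replaceR repl t]
  | t :: ts => t :: replaceRList repl ts
end

/-- The involution h_T on decorated trees, as a relation, following its recursive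
definition on the four structural types of decorated trees. -/
inductive HT : DTree → DTree → Prop where
  /-- Type I: the one-leaf tree is fixed. -/
  | base : HT (.node [.leaf (-1)]) (.node [.leaf (-1)])
  /-- Type II: `T = Δ_T(T', i)`; attach a free leaf as rightmost child of the `i`-th
  node on the rightmost path of `h_T(T')`. -/
  | typeII {T' U' : DTree} {i : ℕ} (h1 : 1 ≤ i) (h2 : i ≤ fl T') (h : HT T' U') :
      HT (deltaT T' i) (attachR U' i)
  /-- Type III: `T` is a free leaf attached as leftmost child of the root of `T'`;
  attach a free leaf below the rightmost leaf of `h_T(T')`. -/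
  | typeIII {ts : List DTree} {U' : DTree} (hne : ts ≠ []) (h : HT (.node ts) U') :
      HT (.node (.leaf (-1) :: ts)) (growR U')
  /-- Type IV: `T = ⊕_T(T1, i, T2)`; replace the rightmost leaf of `h_T(T2)` by
  `h_T(Δ_T(T1, i))` with all leaf labels except the rightmost one increased by
  `rpath (h_T(T2))`. -/
  | typeIV {T1 T2 U1 U2 : DTree} {i : ℕ} (h1 : 1 ≤ i) (h2 : i ≤ fl T1)
      (hA : HT (deltaT T1 i) U1) (hB : HT T2 U2) :
      HT (oplusT T1 i T2) (replaceR (addExceptLast (rpath U2 : ℤ) U1) U2)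

/-!
Induction along the recursive definition of `h_T`: each of the four constructions changes the
number of free leaves of `T` and the length of the rightmost path of `h_T(T)` in the same way.
`Δ_T(T', i)` has exactly `i` free leaves, while attaching a leaf at the `i`-th node of the
rightmost path makes that path of length `i`; a new leftmost free leaf is matched by growing the
rightmost leaf; and for `⊕_T` the free leaves of the two parts add up, as do the rightmost paths
when `h_T(Δ_T(T1, i))` is grafted at the end of the rightmost path of `h_T(T2)`. Two invariants
keep this honest: all labels are at least `-1` (so the relabelling inside `Δ_T` creates no new
free leaf from a label `-2`), and the rightmost path of `h_T(T)` ends at a leaf rather than at a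
childless internal node.
-/

@[induction_eliminator]
theorem DTree.induction_mem {motive : DTree → Prop} (leaf : ∀ l, motive (.leaf l))
    (node : ∀ ts, (∀ t ∈ ts, motive t) → motive (.node ts)) : ∀ t, motive t
  | .leaf l => leaf l
  | .node ts => node ts fun t _ => DTree.induction_mem leaf node t

section RightmostPath

theorem rpathLast_concat : ∀ (xs : List DTree) (t : DTree), rpathLast (xs ++ [t]) = rpath t + 1
  | [], _ => rfl
  | [_], _ => rfl
  | _ :: y :: xs, t => rpathLast_concat (y :: xs) t

theorem growRLast_concat : ∀ (xs : List DTree) (t : DTree),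
    growRLast (xs ++ [t]) = xs ++ [growR t]
  | [], _ => rfl
  | [_], _ => rfl
  | x :: y :: xs, t => congrArg (x :: ·) (growRLast_concat (y :: xs) t)

theorem attachRLast_concat (i : ℕ) : ∀ (xs : List DTree) (t : DTree),
    attachRLast (xs ++ [t]) i = xs ++ [attachR t i]
  | [], _ => rfl
  | [_], _ => rfl
  | x :: y :: xs, t => congrArg (x :: ·) (attachRLast_concat i (y :: xs) t)

theorem replaceRList_concat (repl : DTree) : ∀ (xs : List DTree) (t : DTree),
    replaceRList repl (xs ++ [t]) = xs ++ [replaceR repl t]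
  | [], _ => rfl
  | [_], _ => rfl
  | x :: y :: xs, t => congrArg (x :: ·) (replaceRList_concat repl (y :: xs) t)

theorem addExceptLastList_concat (r : ℤ) : ∀ (xs : List DTree) (t : DTree),
    addExceptLastList r (xs ++ [t]) = addAllList r xs ++ [addExceptLast r t]
  | [], _ => rfl
  | [_], _ => rfl
  | x :: y :: xs, t => congrArg (addAll r x :: ·) (addExceptLastList_concat r (y :: xs) t)

inductive HasRightmostLeaf : DTree → Prop
  | leaf (l : ℤ) : HasRightmostLeaf (.leaf l)
  | node (xs : List DTree) {t : DTree} : HasRightmostLeaf t → HasRightmostLeaf (.node (xs ++ [t]))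

theorem rpath_attachR (t : DTree) (i : ℕ) (h1 : 1 ≤ i) (h2 : i ≤ rpath t) :
    rpath (attachR t i) = i := by
  induction t generalizing i with
  | leaf _ => simp only [rpath] at h2; omega
  | node ts ih =>
    obtain rfl | ⟨xs, b, rfl⟩ := List.eq_nil_or_concat' ts
    · simp only [rpath, rpathLast] at h2; omega
    rw [rpath, rpathLast_concat] at h2
    by_cases hi : i ≤ 1
    · rw [attachR, if_pos hi, rpath, rpathLast_concat, rpath]; omega
    · rw [attachR, if_neg hi, rpath, attachRLast_concat, rpathLast_concat,
        ih b (by simp) (i - 1) (by omega) (by omega)]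
      omega

theorem rpath_addExceptLast (r : ℤ) (t : DTree) : rpath (addExceptLast r t) = rpath t := by
  induction t with
  | leaf _ => rfl
  | node ts ih =>
    obtain rfl | ⟨xs, b, rfl⟩ := List.eq_nil_or_concat' ts
    · rfl
    rw [addExceptLast, rpath, rpath, addExceptLastList_concat, rpathLast_concat,
      rpathLast_concat, ih b (by simp)]

namespace HasRightmostLeaf

variable {t : DTree}

theorem rpath_growR (h : HasRightmostLeaf t) : rpath (growR t) = rpath t + 1 := by
  induction h with
  | leaf _ => rfl
  | node xs _ ih =>
    rw [growR, rpath, rpath, growRLast_concat, rpathLast_concat, rpathLast_concat, ih]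

theorem rpath_replaceR (repl : DTree) (h : HasRightmostLeaf t) :
    rpath (replaceR repl t) = rpath t + rpath repl := by
  induction h with
  | leaf _ => rw [replaceR, rpath, Nat.zero_add]
  | node xs _ ih =>
    rw [replaceR, rpath, rpath, replaceRList_concat, rpathLast_concat, rpathLast_concat, ih]
    omega

theorem growR (h : HasRightmostLeaf t) : HasRightmostLeaf (growR t) := by
  induction h with
  | leaf _ => exact .node [] (.leaf _)
  | node xs _ ih => rw [_root_.growR, growRLast_concat]; exact .node xs ih

theorem attachR (h : HasRightmostLeaf t) (i : ℕ) : HasRightmostLeaf (attachR t i) := by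
  induction h generalizing i with
  | leaf _ => exact .leaf _
  | node xs _ ih =>
    by_cases hi : i ≤ 1
    · rw [_root_.attachR, if_pos hi]; exact .node _ (.leaf _)
    · rw [_root_.attachR, if_neg hi, attachRLast_concat]; exact .node xs (ih _)

theorem replaceR (h : HasRightmostLeaf t) {repl : DTree} (hr : HasRightmostLeaf repl) :
    HasRightmostLeaf (replaceR repl t) := by
  induction h with
  | leaf _ => exact hr
  | node xs _ ih => rw [_root_.replaceR, replaceRList_concat]; exact .node xs ih

theorem addExceptLast (r : ℤ) (h : HasRightmostLeaf t) :
    HasRightmostLeaf (addExceptLast r t) := by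
  induction h with
  | leaf _ => exact .leaf _
  | node xs _ ih => rw [_root_.addExceptLast, addExceptLastList_concat]; exact .node _ ih

end HasRightmostLeaf

end RightmostPath

section FreeLeaves

mutual
theorem incUpTo_snd : ∀ (t : DTree) (m : ℕ), (incUpTo t m).2 = m - (leafLabels t).count (-1)
  | .leaf l, m => by
    by_cases hl : l = -1
    · by_cases hm : 0 < m
      · simp [incUpTo, hl, hm, leafLabels]
      · simp [incUpTo, hl, hm, leafLabels]; omega
    · simp [incUpTo, hl, leafLabels]
  | .node ts, m => incList_snd ts m
theorem incList_snd : ∀ (ts : List DTree) (m : ℕ),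
    (incList ts m).2 = m - (leafLabelsList ts).count (-1)
  | [], m => rfl
  | t :: ts, m => by
    rw [incList, leafLabelsList, List.count_append, incList_snd ts, incUpTo_snd t]
    omega
end

mutual
theorem count_incUpTo : ∀ (t : DTree) (m : ℕ), (∀ x ∈ leafLabels t, -1 ≤ x) →
    (leafLabels (incUpTo t m).1).count (-1) = (leafLabels t).count (-1) - m
  | .leaf l, m, h => by
    have hl1 : -1 ≤ l := h l (List.mem_singleton_self l)
    by_cases hl : l = -1
    · by_cases hm : 0 < m
      · simp [incUpTo, hl, hm, leafLabels]; omega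
      · simp [incUpTo, hl, hm, leafLabels]; omega
    · have : l + 1 ≠ -1 := by omega
      simp [incUpTo, hl, this, leafLabels]
  | .node ts, m, h => count_incList ts m h
theorem count_incList : ∀ (ts : List DTree) (m : ℕ), (∀ x ∈ leafLabelsList ts, -1 ≤ x) →
    (leafLabelsList (incList ts m).1).count (-1) = (leafLabelsList ts).count (-1) - m
  | [], m, _ => by simp [incList, leafLabelsList]
  | t :: ts, m, h => by
    simp only [incList, leafLabelsList, List.count_append]
    rw [count_incUpTo t m (fun x hx => h x (List.mem_append_left _ hx)),
      count_incList ts _ (fun x hx => h x (List.mem_append_right _ hx)), incUpTo_snd]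
    omega
end

mutual
theorem neg_one_le_incUpTo : ∀ (t : DTree) (m : ℕ), (∀ x ∈ leafLabels t, -1 ≤ x) →
    ∀ x ∈ leafLabels (incUpTo t m).1, -1 ≤ x
  | .leaf l, m, h => by
    have hl1 : -1 ≤ l := h l (List.mem_singleton_self l)
    by_cases hl : l = -1
    · by_cases hm : 0 < m <;> simp [incUpTo, hl, hm, leafLabels]
    · simp [incUpTo, hl, leafLabels]; omega
  | .node ts, m, h => neg_one_le_incList ts m h
theorem neg_one_le_incList : ∀ (ts : List DTree) (m : ℕ),
    (∀ x ∈ leafLabelsList ts, -1 ≤ x) → ∀ x ∈ leafLabelsList (incList ts m).1, -1 ≤ x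
  | [], m, _ => by simp [incList, leafLabelsList]
  | t :: ts, m, h => by
    simp only [incList, leafLabelsList, List.mem_append]
    rintro x (hx | hx)
    · exact neg_one_le_incUpTo t m (fun x hx => h x (List.mem_append_left _ hx)) x hx
    · exact neg_one_le_incList ts _ (fun x hx => h x (List.mem_append_right _ hx)) x hx
end

theorem leafLabels_deltaT (T : DTree) (i : ℕ) :
    leafLabels (deltaT T i) = leafLabels (incUpTo T (fl T - i)).1 := by
  simp [deltaT, leafLabels, leafLabelsList]

theorem fl_deltaT {T : DTree} {i : ℕ} (h : ∀ x ∈ leafLabels T, -1 ≤ x) (hi : i ≤ fl T) :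
    fl (deltaT T i) = i := by
  rw [fl, leafLabels_deltaT, count_incUpTo T _ h, ← fl]
  omega

theorem neg_one_le_deltaT {T : DTree} (i : ℕ) (h : ∀ x ∈ leafLabels T, -1 ≤ x) :
    ∀ x ∈ leafLabels (deltaT T i), -1 ≤ x := by
  rw [leafLabels_deltaT]
  exact neg_one_le_incUpTo T _ h

theorem leafLabels_oplusT (T1 : DTree) (i : ℕ) (ts : List DTree) :
    leafLabels (oplusT T1 i (.node ts)) = leafLabels (deltaT T1 i) ++ leafLabels (.node ts) := by
  simp [oplusT, deltaT, leafLabels, leafLabelsList]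

theorem fl_cons_freeLeaf (ts : List DTree) :
    fl (.node (.leaf (-1) :: ts)) = fl (.node ts) + 1 := by
  simp [fl, leafLabels, leafLabelsList]

end FreeLeaves

namespace HT

variable {T U : DTree}

theorem exists_eq_node (h : HT T U) : ∃ ts, T = .node ts := by
  induction h with
  | typeIV _ _ _ _ _ ihB =>
    obtain ⟨ts, rfl⟩ := ihB
    exact ⟨_, rfl⟩
  | _ => exact ⟨_, rfl⟩

theorem neg_one_le (h : HT T U) : ∀ x ∈ leafLabels T, -1 ≤ x := by
  induction h with
  | base => simp [leafLabels, leafLabelsList]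
  | typeII _ _ _ ih => exact neg_one_le_deltaT _ ih
  | typeIII _ _ ih =>
    intro x hx
    rcases List.mem_cons.1 hx with rfl | hx
    exacts [le_rfl, ih x hx]
  | typeIV _ _ _ hB ihA ihB =>
    obtain ⟨ts, rfl⟩ := hB.exists_eq_node
    rw [leafLabels_oplusT]
    intro x hx
    rcases List.mem_append.1 hx with hx | hx
    exacts [ihA x hx, ihB x hx]

theorem hasRightmostLeaf (h : HT T U) : HasRightmostLeaf U := by
  induction h with
  | base => exact .node [] (.leaf _)
  | typeII _ _ _ ih => exact ih.attachR _
  | typeIII _ _ ih => exact ih.growR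
  | typeIV _ _ _ _ ihA ihB => exact ihB.replaceR (ihA.addExceptLast _)

theorem fl_eq_rpath (h : HT T U) : fl T = rpath U := by
  induction h with
  | base => rfl
  | typeII h1 h2 h ih =>
    rw [fl_deltaT h.neg_one_le h2, rpath_attachR _ _ h1 (ih ▸ h2)]
  | typeIII _ h ih => rw [fl_cons_freeLeaf, h.hasRightmostLeaf.rpath_growR, ih]
  | typeIV _ _ _ hB ihA ihB =>
    obtain ⟨ts, rfl⟩ := hB.exists_eq_node
    rw [hB.hasRightmostLeaf.rpath_replaceR, rpath_addExceptLast, ← ihA, ← ihB, fl,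
      leafLabels_oplusT, List.count_append, ← fl, ← fl, Nat.add_comm]

end HT

theorem stmt16 (T U : DTree) (hT : IsDeco T) (h : HT T U) : fl T = rpath U :=
  h.fl_eq_rpath
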